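/- The vector space of homogeneous commutative polynomials of degree m in n variables over a field of characteristic zero admits a basis consisting of m-th powers of linear forms (c₁x₁+⋯+cₙxₙ)^m. -/

import Mathlib

open scoped BigOperators

noncomputable section

/-- The word `X₁^{α₁} ⋯ Xₙ^{αₙ}` as a list of generator indices. -/
def word (n : ℕ) (α : Fin n → ℕ) : List (Fin n) :=
  (List.finRange n).flatMap fun i => List.replicate (α i) i

/-- The symmetrization `symz(X^(α)) = (1/m!) ∑_{σ ∈ Σₘ} X'_{σ(1)} ⋯ X'_{σ(m)}`
of the monomial `X^(α)` in the free associative algebra. -/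
def symz (K : Type) [Field K] (n : ℕ) (α : Fin n → ℕ) : FreeAlgebra K (Fin n) :=
  ((Nat.factorial (word n α).length : K))⁻¹ •
    ∑ σ : Equiv.Perm (Fin (word n α).length),
      (List.ofFn fun j => FreeAlgebra.ι K ((word n α).get (σ j))).prod

/-- Regular homogeneous polynomials of degree `m`: the span of `m`-th powers of
linear forms in the generators. -/
def RegHom (K : Type) [Field K] (n m : ℕ) : Submodule K (FreeAlgebra K (Fin n)) :=
  Submodule.span K {x | ∃ c : Fin n → K, x = (∑ i, c i • FreeAlgebra.ι K i) ^ m}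

/-- Regular polynomials: the span of all powers of linear forms in the generators. -/
def Reg (K : Type) [Field K] (n : ℕ) : Submodule K (FreeAlgebra K (Fin n)) :=
  Submodule.span K {x | ∃ (m : ℕ) (c : Fin n → K), x = (∑ i, c i • FreeAlgebra.ι K i) ^ m}

/-- The symmetrization map `Φ` from commutative polynomials to the free algebra,
sending `x^(α)` to `symz(X^(α))` and extended linearly. -/
def Phi (K : Type) [Field K] (n : ℕ) (p : MvPolynomial (Fin n) K) : FreeAlgebra K (Fin n) :=
  ∑ d ∈ p.support, p.coeff d • symz K n (fun i => d i)

/-!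
If a linear functional `f` vanishes on every `(∑ cᵢ xᵢ)^m = ∑ₖ cᵏ · multinomial(k) xᵏ`, then the
polynomial `∑ₖ f(multinomial(k) xᵏ) cᵏ` in `c` vanishes at every point. Over an infinite field
its coefficients are therefore zero, and in characteristic zero the multinomial coefficients are
invertible, so `f` kills every monomial of degree `m`. Hence the `m`-th powers of linear forms
span the finite-dimensional space of forms of degree `m`, and a spanning family of a
finite-dimensional space contains a basis.
-/

open MvPolynomial Submodule Finset

theorem exists_fin_linearIndependent_span_range_comp_eq {K V ι : Type*} [DivisionRing K]
    [AddCommGroup V] [Module K V] (v : ι → V) (hv : (span K (Set.range v)).FG) :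
    ∃ (d : ℕ) (e : Fin d → ι),
      LinearIndependent K (v ∘ e) ∧ span K (Set.range (v ∘ e)) = span K (Set.range v) := by
  obtain ⟨κ, a, -, hspan, hli⟩ := exists_linearIndependent' K v
  have : Module.Finite K (span K (Set.range (v ∘ a))) := by
    rw [hspan]
    exact Module.Finite.iff_fg.mpr hv
  have : Finite κ := Module.Finite.finite_basis (Module.Basis.span hli)
  have := Fintype.ofFinite κ
  let eκ := (Fintype.equivFin κ).symm
  refine ⟨Fintype.card κ, a ∘ eκ, hli.comp _ eκ.injective, ?_⟩
  rw [← hspan, ← Function.comp_assoc, eκ.surjective.range_comp]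

theorem mem_span_range_sum_prod_pow_smul {K V σ : Type*} [Field K] [Infinite K]
    [AddCommGroup V] [Module K V] [Fintype σ] (s : Finset (σ → ℕ)) (v : (σ → ℕ) → V)
    {k : σ → ℕ} (hk : k ∈ s) :
    v k ∈ span K (Set.range fun c : σ → K => ∑ k ∈ s, (∏ i, c i ^ k i) • v k) := by
  classical
  by_contra hnot
  obtain ⟨f, hfk, hf⟩ := exists_dual_map_eq_bot_of_notMem hnot inferInstance
  have hvanish (c : σ → K) : ∑ k ∈ s, f (v k) * ∏ i, c i ^ k i = 0 := by
    have : f (∑ k ∈ s, (∏ i, c i ^ k i) • v k) ∈ (⊥ : Submodule K K) :=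
      hf ▸ mem_map_of_mem (subset_span (Set.mem_range_self c))
    simpa [mul_comm] using (mem_bot K).1 this
  have hQ : ∑ k ∈ s, monomial (Finsupp.equivFunOnFinite.symm k) (f (v k)) = 0 :=
    MvPolynomial.funext fun c => by
      simpa [eval_monomial, Finsupp.prod_fintype] using hvanish c
  apply hfk
  simpa [coeff_sum, coeff_monomial, hk] using
    congr_arg (coeff (Finsupp.equivFunOnFinite.symm k)) hQ

theorem sum_smul_X_pow_eq_sum_piAntidiag {R σ : Type*} [CommSemiring R] [Fintype σ]
    [DecidableEq σ] (c : σ → R) (m : ℕ) :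
    (∑ i, c i • X i : MvPolynomial σ R) ^ m =
      ∑ k ∈ piAntidiag univ m, (∏ i, c i ^ k i) • (Nat.multinomial univ k • ∏ i, X i ^ k i) := by
  rw [sum_pow_eq_sum_piAntidiag]
  refine sum_congr rfl fun k _ => ?_
  simp only [smul_eq_C_mul, mul_pow, prod_mul_distrib, ← map_pow, ← map_prod, nsmul_eq_mul]
  ring

theorem span_range_sum_smul_X_pow {K σ : Type*} [Field K] [CharZero K] [Fintype σ] (m : ℕ) :
    span K (Set.range fun c : σ → K => (∑ i, c i • X i : MvPolynomial σ K) ^ m) =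
      homogeneousSubmodule σ K m := by
  classical
  apply le_antisymm
  · rw [span_le]
    rintro _ ⟨c, rfl⟩
    have hlin : (∑ i, c i • X i : MvPolynomial σ K) ∈ homogeneousSubmodule σ K 1 := by
      rw [homogeneousSubmodule_one_eq_span_X]
      exact sum_mem fun i _ => smul_mem _ _ (subset_span (Set.mem_range_self i))
    simpa using hlin.pow m
  · rw [homogeneousSubmodule_eq_finsupp_supported, AddMonoidAlgebra.supported_eq_span_single,
      span_le]
    rintro _ ⟨d, hd, rfl⟩
    have hk : ⇑d ∈ piAntidiag univ m := by
      simpa [← Finsupp.degree_eq_sum] using hd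
    have hmem := mem_span_range_sum_prod_pow_smul (K := K) _
      (fun k => Nat.multinomial univ k • ∏ i, (X i : MvPolynomial σ K) ^ k i) hk
    simp_rw [← sum_smul_X_pow_eq_sum_piAntidiag] at hmem
    rw [← Nat.cast_smul_eq_nsmul K,
      smul_mem_iff _ (Nat.cast_ne_zero.2 (Nat.multinomial_pos _ _).ne')] at hmem
    simpa [single_eq_monomial, monomial_eq, Finsupp.prod_fintype] using hmem

theorem homogeneous_polynomials_basis_of_powers (K : Type) [Field K] [CharZero K]
    (n m : ℕ) :
    ∃ (d : ℕ) (c : Fin d → Fin n → K),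
      LinearIndependent K (fun i => (∑ j, c i j • (MvPolynomial.X j : MvPolynomial (Fin n) K)) ^ m) ∧
      Submodule.span K (Set.range fun i => (∑ j, c i j • (MvPolynomial.X j : MvPolynomial (Fin n) K)) ^ m)
        = MvPolynomial.homogeneousSubmodule (Fin n) K m := by
  obtain ⟨d, c, hli, hspan⟩ := exists_fin_linearIndependent_span_range_comp_eq
    (fun c : Fin n → K => (∑ j, c j • X j : MvPolynomial (Fin n) K) ^ m)
    (span_range_sum_smul_X_pow (K := K) (σ := Fin n) m ▸ homogeneousSubmodule_fg (Fin n) K m)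
  exact ⟨d, c, hli, hspan.trans (span_range_sum_smul_X_pow m)⟩

end
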